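/- arXiv:0712.2756 — 5 statements merged into one kernel-verified Lean document; each statement's English description precedes it below -/
import Mathlib

section
/- Let n ≥ 4 be an integer and let R ⊆ Fin n be a set of marked indices with |R| ≤ 1. Then every admissible coefficient system a : Finset (Fin n) → ℝ for the pair (n, R) satisfies a(S) ≥ 0 for every subset S of Fin n. (This is the combinatorial form of the paper's Theorem: for m ∈ {n, n−1}, every S_m-invariant F-nef divisor on the moduli space of stable n-pointed genus zero curves, written in the boundary basis, has all coefficients nonnegative, hence is an effective combination of boundary divisors.) -/
open Finset

/-- An admissible coefficient system for the pair `(n, R)`: the combinatorial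
data of an `S_m`-invariant F-nef divisor on `\bar M_{0,n}` written in boundary
classes, where `R` is the set of marked (non-permuted) indices. -/
def Admissible (n : ℕ) (R : Finset (Fin n)) (a : Finset (Fin n) → ℝ) : Prop :=
  (∀ S : Finset (Fin n), S.card ≤ 1 → a S = 0) ∧
  (∀ S : Finset (Fin n), a S = a Sᶜ) ∧
  (∀ S T : Finset (Fin n), S.card = T.card → S ∩ R = T ∩ R → a S = a T) ∧
  (∀ I J K L : Finset (Fin n),
    I.Nonempty → J.Nonempty → K.Nonempty → L.Nonempty →
    Disjoint I J → Disjoint I K → Disjoint I L →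
    Disjoint J K → Disjoint J L → Disjoint K L →
    I ∪ J ∪ K ∪ L = Finset.univ →
    a I + a J + a K + a L ≤ a (I ∪ J) + a (I ∪ K) + a (I ∪ L))

/-!
Choose `r` with `R ⊆ {r}`. Since `a S = a Sᶜ`, it suffices to treat sets avoiding `r`, on which
`a S = f |S|` for a single sequence `f` with `f 1 = f (n - 1) = 0`. The F-inequality for a
partition `I, J, K, L` with `|I| = 1`, `|J| = p`, `|K| = q` and `r ∈ L` says that the increments
`Δ i = f (i + 1) - f i` are subadditive. Summing `Δ j ≤ Δ i + Δ (j - i)` over `0 < i < j` and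
telescoping gives `(j - 1) f (j + 1) ≤ (j + 1) f j`, so nonnegativity of `f` propagates downwards
from `f (n - 1) = 0`.
-/

theorem sub_one_mul_le_two_mul_sum_Ico_of_le_add (Δ : ℕ → ℝ) (j : ℕ)
    (h : ∀ i ∈ Ico 1 j, Δ j ≤ Δ i + Δ (j - i)) :
    ((j - 1 : ℕ) : ℝ) * Δ j ≤ 2 * ∑ i ∈ Ico 1 j, Δ i := by
  have hreflect : ∑ i ∈ Ico 1 j, Δ (j - i) = ∑ i ∈ Ico 1 j, Δ i := by
    rw [sum_Ico_reflect Δ 1 (Nat.le_succ j), Nat.add_sub_cancel_left, Nat.add_sub_cancel]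
  calc ((j - 1 : ℕ) : ℝ) * Δ j = ∑ _i ∈ Ico 1 j, Δ j := by simp
    _ ≤ ∑ i ∈ Ico 1 j, (Δ i + Δ (j - i)) := sum_le_sum h
    _ = 2 * ∑ i ∈ Ico 1 j, Δ i := by rw [sum_add_distrib, hreflect]; ring

theorem nonneg_of_increments_subadditive (f : ℕ → ℝ) (N : ℕ) (h1 : f 1 = 0) (hN : f N = 0)
    (hsub : ∀ p q, 1 ≤ p → 1 ≤ q → p + q < N →
      f (p + q + 1) - f (p + q) ≤ (f (p + 1) - f p) + (f (q + 1) - f q)) :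
    ∀ j, 1 ≤ j → j ≤ N → 0 ≤ f j := by
  have step : ∀ j, 1 ≤ j → j < N → ((j - 1 : ℕ) : ℝ) * (f (j + 1) - f j) ≤ 2 * f j := by
    intro j hj hjN
    have h := sub_one_mul_le_two_mul_sum_Ico_of_le_add (fun i => f (i + 1) - f i) j
      fun i hi => by
        obtain ⟨hi1, hij⟩ := mem_Ico.mp hi
        simpa [Nat.add_sub_cancel' hij.le] using hsub i (j - i) hi1 (by omega) (by omega)
    rwa [sum_Ico_sub f hj, h1, sub_zero] at h
  intro j hj hjN
  refine Nat.decreasingInduction' (P := fun k => 0 ≤ f k) (fun k hkN hk hnext => ?_) hjN hN.ge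
  have hk1 : (((k - 1 : ℕ) : ℝ)) = k - 1 := by rw [Nat.cast_sub (hj.trans hk), Nat.cast_one]
  have hstep := step k (hj.trans hk) hkN
  rw [hk1] at hstep
  have hprod : 0 ≤ ((k : ℝ) - 1) * f (k + 1) := by
    rw [← hk1]; exact mul_nonneg (Nat.cast_nonneg _) hnext
  refine nonneg_of_mul_nonneg_right (a := (k : ℝ) + 1) ?_ (by positivity)
  linarith

theorem Finset.exists_pairwise_disjoint_subsets_card_eq {α : Type*} [DecidableEq α]
    {U : Finset α} {i j k : ℕ} (h : i + j + k ≤ #U) :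
    ∃ I ⊆ U, ∃ J ⊆ U, ∃ K ⊆ U, #I = i ∧ #J = j ∧ #K = k ∧
      Disjoint I J ∧ Disjoint I K ∧ Disjoint J K := by
  obtain ⟨I, hIU, hI⟩ := exists_subset_card_eq (s := U) (n := i) (by omega)
  obtain ⟨J, hJU, hJ⟩ := exists_subset_card_eq (s := U \ I) (n := j)
    (by rw [card_sdiff_of_subset hIU]; omega)
  obtain ⟨K, hKU, hK⟩ := exists_subset_card_eq (s := (U \ I) \ J) (n := k)
    (by rw [card_sdiff_of_subset hJU, card_sdiff_of_subset hIU]; omega)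
  refine ⟨I, hIU, J, hJU.trans sdiff_subset, K, hKU.trans (sdiff_subset.trans sdiff_subset),
    hI, hJ, hK, ?_, ?_, ?_⟩
  · exact disjoint_of_subset_right hJU disjoint_sdiff
  · exact disjoint_of_subset_right (hKU.trans sdiff_subset) disjoint_sdiff
  · exact disjoint_of_subset_right hKU disjoint_sdiff

namespace Admissible

variable {n : ℕ} {R : Finset (Fin n)} {a : Finset (Fin n) → ℝ}

theorem apply_eq_of_card_eq (ha : Admissible n R a) {S T : Finset (Fin n)}
    (hS : Disjoint S R) (hT : Disjoint T R) (h : #S = #T) : a S = a T :=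
  ha.2.2.1 S T h <| by rw [disjoint_iff_inter_eq_empty.mp hS, disjoint_iff_inter_eq_empty.mp hT]

theorem add_le_of_disjoint (ha : Admissible n R a) {I J K : Finset (Fin n)}
    (hI : I.Nonempty) (hJ : J.Nonempty) (hK : K.Nonempty) (hL : (I ∪ J ∪ K)ᶜ.Nonempty)
    (hIJ : Disjoint I J) (hIK : Disjoint I K) (hJK : Disjoint J K) :
    a I + a J + a K + a (I ∪ J ∪ K) ≤ a (I ∪ J) + a (I ∪ K) + a (J ∪ K) := by
  obtain ⟨-, hcompl, -, hF⟩ := ha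
  have hIL : I ∪ (I ∪ J ∪ K)ᶜ = (J ∪ K)ᶜ := by
    ext x
    simp only [mem_union, mem_compl]
    have hxJ : x ∈ I → x ∉ J := fun h => disjoint_left.mp hIJ h
    have hxK : x ∈ I → x ∉ K := fun h => disjoint_left.mp hIK h
    tauto
  have := hF I J K (I ∪ J ∪ K)ᶜ hI hJ hK hL hIJ hIK
    (disjoint_compl_right.mono_left (subset_union_left.trans subset_union_left)) hJK
    (disjoint_compl_right.mono_left (subset_union_right.trans subset_union_left))
    (disjoint_compl_right.mono_left subset_union_right)
    (union_compl _)
  rwa [hIL, ← hcompl, ← hcompl] at this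

theorem nonneg_of_subset_compl_singleton (ha : Admissible n R a) {r : Fin n} (hR : R ⊆ {r})
    {S : Finset (Fin n)} (hS : S ⊆ {r}ᶜ) : 0 ≤ a S := by
  have hU : #({r}ᶜ : Finset (Fin n)) = n - 1 := by
    rw [card_compl, card_singleton, Fintype.card_fin]
  have hdisj : ∀ T ⊆ ({r}ᶜ : Finset (Fin n)), Disjoint T R := fun T hT =>
    disjoint_of_subset_right hR (subset_compl_iff_disjoint_right.mp hT)
  -- `min` only makes the choice total; `C i` is used for `i ≤ n - 1`.
  choose C hCU hCcard using fun i => exists_subset_card_eq (s := ({r}ᶜ : Finset (Fin n)))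
    (n := min i (n - 1)) (by omega)
  set f : ℕ → ℝ := fun i => a (C i)
  have hval : ∀ T ⊆ ({r}ᶜ : Finset (Fin n)), a T = f #T := fun T hT =>
    ha.apply_eq_of_card_eq (hdisj T hT) (hdisj _ (hCU _)) <| by
      have := card_le_card hT; rw [hCcard]; omega
  have hf1 : f 1 = 0 := ha.1 _ (by rw [hCcard]; omega)
  have hftop : f (n - 1) = 0 := by
    simp only [f]
    rw [ha.2.1, ha.1]
    rw [card_compl, hCcard, Fintype.card_fin]
    omega
  have hsub : ∀ p q, 1 ≤ p → 1 ≤ q → p + q < n - 1 →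
      f (p + q + 1) - f (p + q) ≤ (f (p + 1) - f p) + (f (q + 1) - f q) := by
    intro p q hp hq hpq
    obtain ⟨I, hIU, J, hJU, K, hKU, hI, hJ, hK, hIJ, hIK, hJK⟩ :=
      exists_pairwise_disjoint_subsets_card_eq (U := {r}ᶜ) (i := 1) (j := p) (k := q) (by omega)
    have hIJK : I ∪ J ∪ K ⊆ {r}ᶜ := union_subset (union_subset hIU hJU) hKU
    have := ha.add_le_of_disjoint (card_pos.mp (by omega)) (card_pos.mp (by omega))
      (card_pos.mp (by omega)) ⟨r, mem_compl.mpr fun h => by simpa using hIJK h⟩ hIJ hIK hJK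
    rw [ha.1 I hI.le, hval J hJU, hval K hKU, hval _ hIJK, hval _ (union_subset hIU hJU),
      hval _ (union_subset hIU hKU), hval _ (union_subset hJU hKU)] at this
    rw [card_union_of_disjoint (disjoint_union_left.mpr ⟨hIK, hJK⟩), card_union_of_disjoint hIJ,
      card_union_of_disjoint hIK, card_union_of_disjoint hJK, hI, hJ, hK] at this
    rw [add_comm 1 p, add_comm 1 q, add_right_comm p 1 q] at this
    linarith
  rw [hval S hS]
  rcases Nat.eq_zero_or_pos #S with h0 | hpos
  · exact (ha.1 _ (by rw [hCcard]; omega)).ge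
  · exact nonneg_of_increments_subadditive f (n - 1) hf1 hftop hsub _ hpos <| by
      have := card_le_card hS; omega

end Admissible

theorem stmt_0_general (n : ℕ) (R : Finset (Fin n)) (hR : R.card ≤ 1)
    (a : Finset (Fin n) → ℝ) (ha : Admissible n R a) :
    ∀ S : Finset (Fin n), 0 ≤ a S := by
  intro S
  rcases le_or_gt #S 1 with hS | hS
  · exact (ha.1 S hS).ge
  obtain ⟨x, -⟩ := card_pos.mp (zero_lt_one.trans hS)
  have : Nonempty (Fin n) := ⟨x⟩
  obtain ⟨r, hRr⟩ := card_le_one_iff_subset_singleton.mp hR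
  by_cases hr : r ∈ S
  · rw [ha.2.1]
    exact ha.nonneg_of_subset_compl_singleton hRr
      (compl_subset_compl.mpr (singleton_subset_iff.mpr hr))
  · exact ha.nonneg_of_subset_compl_singleton hRr (subset_compl_singleton.mpr hr)

/-- If `|R| ≤ 1` (the cases `m = n` and `m = n-1` of the paper's Theorem),
every admissible coefficient system for `(n, R)` with `n ≥ 4` has all
coefficients nonnegative. -/
theorem stmt_0 (n : ℕ) (hn : 4 ≤ n) (R : Finset (Fin n)) (hR : R.card ≤ 1)
    (a : Finset (Fin n) → ℝ) (ha : Admissible n R a) :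
    ∀ S : Finset (Fin n), 0 ≤ a S :=
  stmt_0_general n R hR a ha
end

section
/- Let n ≥ 4 be an integer and let R = {p₁, p₂, p₃} ⊆ Fin n with |R| = 3. Then every admissible coefficient system a : Finset (Fin n) → ℝ for (n, R) that additionally satisfies the normalizations a({p₁,p₂}) = 0, a({p₁,p₃}) = 0 and a({p₁,p₂,p₃}) = 0 (corresponding to writing the divisor in Rulla's basis ℬ_{n,n−3} of S_{n−3}-invariant boundary classes) satisfies a(S) ≥ 0 for every subset S of Fin n. (This is the combinatorial form of the paper's Theorem for m = n−3.) -/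
open Finset

/-!
For `T ⊆ R` write `[j]_T` for the value of `a` on `T` together with `j` unmarked indices,
`0 ≤ j ≤ m = n - 3`. Since `a S = a Sᶜ` and `|R| = 3`, every coefficient is some `[j]_T` with
`|T| ≤ 1`, so it suffices to show that each sequence `g = [·]_T` is nonnegative.

F-nefness for the partition `T ∪ Z, K, {x}, rest` (with `Z`, `K`, `x` unmarked, `|Z| = u`,
`|K| = d`) says `Δg(u + d) - Δg(u) ≤ Δf(d)` for `f = [·]_∅`. Fix `0 < t < m` and use the
instances `u = t - 1 - x`, `d = x + y + 1` for `(x, y) ∈ [0, t - 1] × [0, m - t - 1]`, weighted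
by the number of monotone lattice paths from `(0, 0)` to `(t - 1, m - t - 1)` through `(x, y)`.
The `g`-terms telescope along rows and columns, and the `f`-terms along antidiagonals, each of
which every path meets exactly once. Since `f(1) = f(m) = 0` and `g(0) = 0`, the sum becomes
`C(m - 1, m - t) (g(m) - g(t)) ≤ C(m - 1, t) g(t)`, so `g(m) ≥ 0` forces `g(t) ≥ 0`.

Finally `[m]_T = a(R \ T)`, which is `0` by the normalization or `a{p₂, p₃}`, and
`a{p₂, p₃} ≥ 0` by F-nefness for the partition `{p₁}, {p₂}, {p₃}, Rᶜ`.
-/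

theorem sum_antidiagonal_add_choose_mul_add_choose (a b n : ℕ) :
    ∑ ij ∈ antidiagonal n, (a + ij.1).choose a * (b + ij.2).choose b =
      (a + b + 1 + n).choose (a + b + 1) := by
  have h : (PowerSeries.invOneSubPow ℤ (a + 1) * PowerSeries.invOneSubPow ℤ (b + 1)).val =
      (PowerSeries.invOneSubPow ℤ (a + b + 1 + 1)).val := by
    simp only [PowerSeries.invOneSubPow_eq_inv_one_sub_pow, ← pow_add]
    ring_nf
  have := congrArg (PowerSeries.coeff n) h
  simp only [Units.val_mul, PowerSeries.invOneSubPow_val_succ_eq_mk_add_choose,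
    PowerSeries.coeff_mul, PowerSeries.coeff_mk] at this
  exact_mod_cast this

theorem sum_range_choose_mul_choose {N p s : ℕ} (hs : s ≤ N) :
    ∑ x ∈ range (p + 1), s.choose x * (N - s).choose (p - x) = N.choose p := by
  rw [← Nat.sum_antidiagonal_eq_sum_range_succ (fun i j => s.choose i * (N - s).choose j),
    ← Nat.add_choose_eq, Nat.add_sub_cancel' hs]

theorem sum_range_add_eq_sum_range {M : Type*} [AddCommMonoid M] {H : ℕ → M} {x q N : ℕ}
    (hN : x + q ≤ N) (hlow : ∀ s < x, H s = 0) (hhigh : ∀ s, x + q < s → s ≤ N → H s = 0) :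
    ∑ y ∈ range (q + 1), H (x + y) = ∑ s ∈ range (N + 1), H s := by
  rw [← add_tsub_cancel_left x (q + 1), ← sum_Ico_eq_sum_range]
  refine sum_subset (fun s hs => ?_) fun s hsN hs => ?_
  · simp only [mem_Ico, mem_range] at hs ⊢
    omega
  · rw [mem_range] at hsN
    rw [mem_Ico, not_and_or, not_le, not_lt] at hs
    rcases hs with hs | hs
    · exact hlow s hs
    · exact hhigh s hs (by omega)

/-- The number of monotone lattice paths from `(0, 0)` to `(p, q)` through `(x, y)`. -/
def latticePathsThrough (p q x y : ℕ) : ℕ :=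
  (x + y).choose x * ((p - x) + (q - y)).choose (p - x)

theorem latticePathsThrough_comm (p q x y : ℕ) :
    latticePathsThrough p q x y = latticePathsThrough q p y x := by
  rw [latticePathsThrough, latticePathsThrough, add_comm x, add_comm (p - x), Nat.choose_symm_add,
    Nat.choose_symm_add]

theorem sum_latticePathsThrough_row {p q x : ℕ} (hx : x ≤ p) :
    ∑ y ∈ range (q + 1), latticePathsThrough p q x y = (p + q + 1).choose (p + 1) := by
  have h := sum_antidiagonal_add_choose_mul_add_choose x (p - x) q
  rwa [Nat.sum_antidiagonal_eq_sum_range_succ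
      (fun i j => (x + i).choose x * (p - x + j).choose (p - x)),
    Nat.add_sub_cancel' hx, add_right_comm] at h

theorem sum_latticePathsThrough_column (p : ℕ) {q y : ℕ} (hy : y ≤ q) :
    ∑ x ∈ range (p + 1), latticePathsThrough p q x y = (p + q + 1).choose (q + 1) := by
  simp only [latticePathsThrough_comm p q]
  rw [sum_latticePathsThrough_row hy, add_comm q]

theorem sum_latticePathsThrough_mul_row (p q : ℕ) (G : ℕ → ℝ) :
    ∑ x ∈ range (p + 1), ∑ y ∈ range (q + 1), (latticePathsThrough p q x y : ℝ) * G x =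
      (p + q + 1).choose (p + 1) * ∑ x ∈ range (p + 1), G x := by
  rw [mul_sum]
  refine sum_congr rfl fun x hx => ?_
  rw [← sum_mul, ← Nat.cast_sum,
    sum_latticePathsThrough_row (Nat.lt_succ_iff.mp (mem_range.mp hx))]

theorem sum_latticePathsThrough_mul_column (p q : ℕ) (G : ℕ → ℝ) :
    ∑ x ∈ range (p + 1), ∑ y ∈ range (q + 1), (latticePathsThrough p q x y : ℝ) * G y =
      (p + q + 1).choose (q + 1) * ∑ y ∈ range (q + 1), G y := by
  rw [sum_comm, mul_sum]
  refine sum_congr rfl fun y hy => ?_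
  rw [← sum_mul, ← Nat.cast_sum,
    sum_latticePathsThrough_column p (Nat.lt_succ_iff.mp (mem_range.mp hy))]

theorem sum_latticePathsThrough_mul_antidiagonal (p q : ℕ) (F : ℕ → ℝ) :
    ∑ x ∈ range (p + 1), ∑ y ∈ range (q + 1), (latticePathsThrough p q x y : ℝ) * F (x + y) =
      (p + q).choose p * ∑ s ∈ range (p + q + 1), F s := by
  have hrow : ∀ x ∈ range (p + 1),
      ∑ y ∈ range (q + 1), (latticePathsThrough p q x y : ℝ) * F (x + y) =
        ∑ s ∈ range (p + q + 1), ((s.choose x * (p + q - s).choose (p - x) : ℕ) : ℝ) * F s := by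
    intro x hx
    have hx := Nat.lt_succ_iff.mp (mem_range.mp hx)
    have hpath : ∀ y ∈ range (q + 1), latticePathsThrough p q x y =
        (x + y).choose x * (p + q - (x + y)).choose (p - x) := fun y hy => by
      rw [latticePathsThrough, show p - x + (q - y) = p + q - (x + y) by
        have := mem_range.mp hy; omega]
    rw [sum_congr rfl fun y hy => by rw [hpath y hy]]
    refine sum_range_add_eq_sum_range
      (H := fun s => ((s.choose x * (p + q - s).choose (p - x) : ℕ) : ℝ) * F s)
      (by omega) (fun s hs => ?_) (fun s hs hsN => ?_)
    · rw [Nat.choose_eq_zero_of_lt hs, zero_mul, Nat.cast_zero, zero_mul]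
    · rw [Nat.choose_eq_zero_of_lt (by omega : p + q - s < p - x), mul_zero, Nat.cast_zero,
        zero_mul]
  rw [sum_congr rfl hrow, sum_comm, mul_sum]
  refine sum_congr rfl fun s hs => ?_
  rw [← sum_mul, ← Nat.cast_sum,
    sum_range_choose_mul_choose (Nat.lt_succ_iff.mp (mem_range.mp hs))]

/-- The increments of `g` grow by at most the increments of `f`:
`(g (u + d + 1) - g (u + d)) - (g (u + 1) - g u) ≤ f (d + 1) - f d`. -/
def IncrementsBoundedBy (m : ℕ) (f g : ℕ → ℝ) : Prop :=
  ∀ u d, 1 ≤ d → u + d + 1 ≤ m → g u + f d + g (u + d + 1) ≤ g (u + 1) + f (d + 1) + g (u + d)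

namespace IncrementsBoundedBy

variable {f g : ℕ → ℝ}

theorem choose_mul_le {p q : ℕ} (h : IncrementsBoundedBy (p + q + 2) f g) :
    ((p + q + 1).choose (q + 1) : ℝ) * (g (p + q + 2) - g (p + 1)) ≤
      (p + q + 1).choose (p + 1) * (g (p + 1) - g 0) +
        (p + q).choose p * (f (p + q + 2) - f 1) := by
  have hrows : ∑ x ∈ range (p + 1), ∑ y ∈ range (q + 1),
      (latticePathsThrough p q x y : ℝ) * (g (p - x + 1) - g (p - x)) =
        (p + q + 1).choose (p + 1) * (g (p + 1) - g 0) := by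
    rw [sum_latticePathsThrough_mul_row, ← sum_range_sub,
      ← sum_range_reflect (fun i => g (i + 1) - g i)]
    simp only [add_tsub_cancel_right]
  have hcols : ∑ x ∈ range (p + 1), ∑ y ∈ range (q + 1),
      (latticePathsThrough p q x y : ℝ) * (g (p + 1 + (y + 1)) - g (p + 1 + y)) =
        (p + q + 1).choose (q + 1) * (g (p + q + 2) - g (p + 1)) := by
    rw [sum_latticePathsThrough_mul_column, sum_range_sub (fun i => g (p + 1 + i)), add_zero,
      show p + 1 + (q + 1) = p + q + 2 by ring]
  have hdiags : ∑ x ∈ range (p + 1), ∑ y ∈ range (q + 1),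
      (latticePathsThrough p q x y : ℝ) * (f (x + y + 1 + 1) - f (x + y + 1)) =
        (p + q).choose p * (f (p + q + 2) - f 1) := by
    rw [sum_latticePathsThrough_mul_antidiagonal p q (fun s => f (s + 1 + 1) - f (s + 1)),
      sum_range_sub (fun s => f (s + 1))]
  rw [← hrows, ← hcols, ← hdiags, ← sub_nonneg]
  simp only [← sum_add_distrib, ← sum_sub_distrib, ← mul_add, ← mul_sub]
  refine sum_nonneg fun x hx => sum_nonneg fun y hy => mul_nonneg (Nat.cast_nonneg _) ?_
  have hx := mem_range.mp hx
  have hy := mem_range.mp hy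
  have := h (p - x) (x + y + 1) (by omega) (by omega)
  rw [show p - x + (x + y + 1) = p + 1 + y by omega, add_assoc (p + 1)] at this
  linarith

theorem nonneg {m : ℕ} (h : IncrementsBoundedBy m f g) (hf1 : f 1 = 0) (hfm : f m = 0)
    (hg0 : g 0 = 0) (hgm : 0 ≤ g m) {t : ℕ} (ht : t ≤ m) : 0 ≤ g t := by
  rcases Nat.eq_zero_or_pos t with rfl | ht0
  · exact hg0.ge
  rcases ht.eq_or_lt with rfl | htm
  · exact hgm
  obtain ⟨p, rfl⟩ : ∃ p, t = p + 1 := ⟨t - 1, by omega⟩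
  obtain ⟨q, rfl⟩ : ∃ q, m = p + q + 2 := ⟨m - p - 2, by omega⟩
  have hpq := h.choose_mul_le
  rw [hfm, hf1, hg0, sub_zero, sub_zero, mul_zero, add_zero] at hpq
  have hp : (0 : ℝ) < (p + q + 1).choose (p + 1) := by exact_mod_cast Nat.choose_pos (by omega)
  have hq : (0 : ℝ) ≤ (p + q + 1).choose (q + 1) := Nat.cast_nonneg _
  refine nonneg_of_mul_nonneg_right (a := ((p + q + 1).choose (p + 1) : ℝ) +
    (p + q + 1).choose (q + 1)) ?_ (add_pos_of_pos_of_nonneg hp hq)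
  linarith [mul_nonneg hq hgm]

end IncrementsBoundedBy

theorem ne_and_ne_and_ne_of_card_eq_three {α : Type*} [DecidableEq α] {x y z : α}
    (h : #{x, y, z} = 3) : x ≠ y ∧ x ≠ z ∧ y ≠ z := by
  refine ⟨?_, ?_, ?_⟩ <;> rintro rfl <;> simp at h <;>
    exact absurd h (card_le_two.trans_lt (by norm_num)).ne

theorem exists_disjoint_subsets_card_eq {α : Type*} [DecidableEq α] {s : Finset α} {u d : ℕ}
    (h : u + d + 1 ≤ #s) :
    ∃ Z ⊆ s, ∃ K ⊆ s, ∃ x ∈ s, #Z = u ∧ #K = d ∧ Disjoint Z K ∧ x ∉ Z ∪ K := by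
  obtain ⟨Z, hZ, hZcard⟩ := exists_subset_card_eq (show u ≤ #s by omega)
  obtain ⟨K, hK, hKcard⟩ := exists_subset_card_eq
    (show d ≤ #(s \ Z) from by rw [card_sdiff_of_subset hZ]; omega)
  have hrest : ((s \ Z) \ K).Nonempty :=
    card_pos.mp (by rw [card_sdiff_of_subset hK, card_sdiff_of_subset hZ]; omega)
  obtain ⟨x, hx⟩ := hrest
  simp only [mem_sdiff] at hx
  refine ⟨Z, hZ, K, hK.trans sdiff_subset, x, hx.1.1, hZcard, hKcard,
    disjoint_of_subset_right hK disjoint_sdiff, ?_⟩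
  rw [mem_union, not_or]
  exact ⟨hx.1.2, hx.2⟩

/-- `profile R a T j` is the paper's `[#T + j]_T`, the value of `a` on `T` together with `j`
unmarked indices. For `j > #Rᶜ` it is the junk value `[#T + #Rᶜ]_T`. -/
noncomputable def profile {n : ℕ} (R : Finset (Fin n)) (a : Finset (Fin n) → ℝ)
    (T : Finset (Fin n)) (j : ℕ) : ℝ :=
  a (T ∪ (exists_subset_card_eq (min_le_right j #Rᶜ)).choose)

section

variable {n : ℕ} {R : Finset (Fin n)} {a : Finset (Fin n) → ℝ}

theorem exists_profile_eq (R : Finset (Fin n)) (a : Finset (Fin n) → ℝ) (T : Finset (Fin n))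
    (j : ℕ) : ∃ X ⊆ Rᶜ, #X = min j #Rᶜ ∧ profile R a T j = a (T ∪ X) :=
  ⟨_, (exists_subset_card_eq (min_le_right j #Rᶜ)).choose_spec.1,
    (exists_subset_card_eq (min_le_right j #Rᶜ)).choose_spec.2, rfl⟩

theorem profile_zero (T : Finset (Fin n)) : profile R a T 0 = a T := by
  obtain ⟨X, -, hX, hprof⟩ := exists_profile_eq R a T 0
  rw [hprof, (card_eq_zero (s := X)).mp (by simpa using hX), union_empty]

namespace Admissible

theorem profile_empty_one (ha : Admissible n R a) : profile R a ∅ 1 = 0 := by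
  obtain ⟨X, -, hX, hprof⟩ := exists_profile_eq R a ∅ 1
  rw [hprof, empty_union]
  exact ha.1 X (hX ▸ min_le_left 1 _)

theorem apply_union_eq_profile (ha : Admissible n R a) {T X : Finset (Fin n)} (hT : T ⊆ R)
    (hX : X ⊆ Rᶜ) : a (T ∪ X) = profile R a T #X := by
  obtain ⟨Y, hY, hYcard, hprof⟩ := exists_profile_eq R a T #X
  rw [min_eq_left (card_le_card hX)] at hYcard
  have htrace : ∀ Z ⊆ Rᶜ, (T ∪ Z) ∩ R = T := fun Z hZ => by
    rw [union_inter_distrib_right, inter_eq_left.mpr hT,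
      disjoint_iff_inter_eq_empty.mp (subset_compl_iff_disjoint_right.mp hZ), union_empty]
  rw [hprof]
  refine ha.2.2.1 _ _ ?_ (by rw [htrace X hX, htrace Y hY])
  rw [card_union_of_disjoint (disjoint_compl_right.mono hT hX),
    card_union_of_disjoint (disjoint_compl_right.mono hT hY), hYcard]

theorem apply_eq_profile_empty (ha : Admissible n R a) {X : Finset (Fin n)} (hX : X ⊆ Rᶜ) :
    a X = profile R a ∅ #X := by
  rw [← ha.apply_union_eq_profile (empty_subset R) hX, empty_union]

theorem apply_eq_profile (ha : Admissible n R a) (S : Finset (Fin n)) :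
    a S = profile R a (S ∩ R) #(S \ R) := by
  conv_lhs => rw [← (sup_inf_sdiff S R : S ∩ R ∪ S \ R = S)]
  exact ha.apply_union_eq_profile inter_subset_right
    (by rw [sdiff_eq_inter_compl]; exact inter_subset_right)

theorem profile_card_compl (ha : Admissible n R a) {T : Finset (Fin n)} (hT : T ⊆ R) :
    profile R a T #Rᶜ = a (R \ T) := by
  rw [← ha.apply_union_eq_profile hT subset_rfl, ha.2.1, compl_union, compl_compl, inter_comm,
    sdiff_eq_inter_compl]

theorem f_inequality (ha : Admissible n R a) {I J K : Finset (Fin n)} (hI : I.Nonempty)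
    (hJ : J.Nonempty) (hK : K.Nonempty) (hIJ : Disjoint I J) (hIK : Disjoint I K)
    (hJK : Disjoint J K) (hL : (I ∪ J ∪ K)ᶜ.Nonempty) :
    a I + a J + a K + a (I ∪ J ∪ K) ≤ a (I ∪ J) + a (I ∪ K) + a (J ∪ K) := by
  have h := ha.2.2.2 I J K (I ∪ J ∪ K)ᶜ hI hJ hK hL hIJ hIK
    (disjoint_compl_right.mono_left (subset_union_left.trans subset_union_left)) hJK
    (disjoint_compl_right.mono_left (subset_union_right.trans subset_union_left))
    (disjoint_compl_right.mono_left subset_union_right) (union_compl _)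
  have hIL : (I ∪ (I ∪ J ∪ K)ᶜ)ᶜ = J ∪ K := by
    ext i
    have hiJ : i ∈ I → i ∉ J := fun h => disjoint_left.mp hIJ h
    have hiK : i ∈ I → i ∉ K := fun h => disjoint_left.mp hIK h
    simp only [compl_union, mem_inter, mem_compl, mem_union]
    tauto
  rwa [ha.2.1 (I ∪ J ∪ K)ᶜ, compl_compl, ha.2.1 (I ∪ (I ∪ J ∪ K)ᶜ), hIL] at h

theorem apply_union_union_eq_profile (ha : Admissible n R a) {T X Y : Finset (Fin n)}
    (hT : T ⊆ R) (hX : X ⊆ Rᶜ) (hY : Y ⊆ Rᶜ) (hXY : Disjoint X Y) :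
    a (T ∪ X ∪ Y) = profile R a T (#X + #Y) := by
  rw [union_assoc, ha.apply_union_eq_profile hT (union_subset hX hY), card_union_of_disjoint hXY]

theorem incrementsBoundedBy_profile (ha : Admissible n R a) {T : Finset (Fin n)} (hT : T ⊂ R) :
    IncrementsBoundedBy #Rᶜ (profile R a ∅) (profile R a T) := by
  intro u d hd hud
  obtain ⟨Z, hZ, K, hK, x, hx, rfl, rfl, hZK, hxZK⟩ := exists_disjoint_subsets_card_eq hud
  rw [mem_union, not_or] at hxZK
  have hx' : {x} ⊆ Rᶜ := singleton_subset_iff.mpr hx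
  have hZx : Disjoint Z {x} := disjoint_singleton_right.mpr hxZK.1
  have hKx : Disjoint K {x} := disjoint_singleton_right.mpr hxZK.2
  rcases (T ∪ Z).eq_empty_or_nonempty with hTZ | hTZ
  · obtain ⟨rfl, rfl⟩ := union_eq_empty.mp hTZ
    rw [card_empty, zero_add, zero_add, profile_zero, ha.profile_empty_one, ha.1 ∅ (by simp)]
    linarith
  have hXc : (T ∪ Z ∪ K ∪ {x})ᶜ.Nonempty := by
    obtain ⟨r, hrR, hrT⟩ := exists_of_ssubset hT
    refine ⟨r, mem_compl.mpr ?_⟩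
    simp only [mem_union, not_or]
    exact ⟨⟨⟨hrT, fun h => mem_compl.mp (hZ h) hrR⟩, fun h => mem_compl.mp (hK h) hrR⟩,
      fun h => mem_compl.mp (hx' h) hrR⟩
  have h := ha.f_inequality hTZ (card_pos.mp (by omega)) (singleton_nonempty x)
    (disjoint_union_left.mpr ⟨disjoint_compl_right.mono hT.subset hK, hZK⟩)
    (disjoint_union_left.mpr ⟨disjoint_compl_right.mono hT.subset hx', hZx⟩) hKx hXc
  have haKx : a (K ∪ {x}) = profile R a ∅ (#K + #{x}) := by
    simpa only [empty_union] using ha.apply_union_union_eq_profile (empty_subset R) hK hx' hKx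
  rw [union_assoc T Z K, ha.apply_union_union_eq_profile hT.subset (union_subset hZ hK) hx'
      (disjoint_union_left.mpr ⟨hZx, hKx⟩), card_union_of_disjoint hZK,
    ha.apply_union_eq_profile hT.subset hZ, ha.apply_eq_profile_empty hK,
    ha.1 {x} (card_singleton x).le, ← union_assoc,
    ha.apply_union_union_eq_profile hT.subset hZ hK hZK,
    ha.apply_union_union_eq_profile hT.subset hZ hx' hZx, haKx, card_singleton] at h
  linarith

theorem profile_nonneg (ha : Admissible n R a) {T : Finset (Fin n)} (hT : T ⊂ R) (hT1 : #T ≤ 1)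
    (hR : a R = 0) (htop : 0 ≤ a (R \ T)) {j : ℕ} (hj : j ≤ #Rᶜ) : 0 ≤ profile R a T j :=
  (ha.incrementsBoundedBy_profile hT).nonneg ha.profile_empty_one
    (by rw [ha.profile_card_compl (empty_subset R), sdiff_empty, hR])
    (by rw [profile_zero, ha.1 T hT1]) (by rwa [ha.profile_card_compl hT.subset]) hj

theorem nonneg_of_profile_nonneg (ha : Admissible n R a) (hR : #R ≤ 3)
    (h : ∀ T ⊆ R, #T ≤ 1 → ∀ j ≤ #Rᶜ, 0 ≤ profile R a T j) (S : Finset (Fin n)) : 0 ≤ a S := by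
  have hcard : ∀ S : Finset (Fin n), #(S \ R) ≤ #Rᶜ := fun S =>
    card_le_card (by rw [sdiff_eq_inter_compl]; exact inter_subset_right)
  have hsplit := card_inter_add_card_sdiff R S
  rcases le_or_gt #(S ∩ R) 1 with hS | hS
  · rw [ha.apply_eq_profile S]
    exact h _ inter_subset_right hS _ (hcard S)
  · rw [ha.2.1, ha.apply_eq_profile Sᶜ, inter_comm, ← sdiff_eq_inter_compl]
    rw [inter_comm] at hS
    exact h _ sdiff_subset (by omega) _ (hcard _)

theorem apply_insert_insert_le (ha : Admissible n R a) {x y z : Fin n} (hxy : x ≠ y)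
    (hxz : x ≠ z) (hyz : y ≠ z) (hc : ({x, y, z} : Finset (Fin n))ᶜ.Nonempty) :
    a {x, y, z} ≤ a {x, y} + a {x, z} + a {y, z} := by
  have h := ha.f_inequality (singleton_nonempty x) (singleton_nonempty y) (singleton_nonempty z)
    (disjoint_singleton.mpr hxy) (disjoint_singleton.mpr hxz) (disjoint_singleton.mpr hyz)
    (by rwa [← insert_eq, insert_union, ← insert_eq])
  simp only [ha.1 _ (card_singleton _).le, ← insert_eq, insert_union] at h
  linarith

theorem apply_sdiff_nonneg (ha : Admissible n R a) (hn : 4 ≤ n) {p₁ p₂ p₃ : Fin n}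
    (hR : R = {p₁, p₂, p₃}) (hcard : #R = 3) (h12 : a {p₁, p₂} = 0) (h13 : a {p₁, p₃} = 0)
    (hR0 : a R = 0) {T : Finset (Fin n)} (hTR : T ⊆ R) (hT1 : #T ≤ 1) : 0 ≤ a (R \ T) := by
  obtain ⟨h₁₂, h₁₃, h₂₃⟩ := ne_and_ne_and_ne_of_card_eq_three (hR ▸ hcard)
  rcases Nat.le_one_iff_eq_zero_or_eq_one.mp hT1 with h0 | h1
  · rw [card_eq_zero.mp h0, sdiff_empty, hR0]
  obtain ⟨i, rfl⟩ := card_eq_one.mp h1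
  have hi : i ∈ R := hTR (mem_singleton_self i)
  rw [hR, mem_insert, mem_insert, mem_singleton] at hi
  subst hR
  rcases hi with rfl | rfl | rfl
  · have hc : ({i, p₂, p₃} : Finset (Fin n))ᶜ.Nonempty := by
      rw [← card_pos, card_compl, Fintype.card_fin, hcard]
      omega
    have h := ha.apply_insert_insert_le h₁₂ h₁₃ h₂₃ hc
    rw [show ({i, p₂, p₃} : Finset (Fin n)) \ {i} = {p₂, p₃} by grind]
    linarith
  · rw [show ({p₁, i, p₃} : Finset (Fin n)) \ {i} = {p₁, p₃} by grind, h13]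
  · rw [show ({p₁, p₂, i} : Finset (Fin n)) \ {i} = {p₁, p₂} by grind, h12]

end Admissible

end

/-- The case `m = n-3` of the paper's Theorem: if `R = {p₁, p₂, p₃}` has three
elements and the coefficients `[2]_{p₁p₂}`, `[2]_{p₁p₃}`, `[3]_{p₁p₂p₃}`
vanish (Rulla's basis normalization), then all coefficients of an admissible
system are nonnegative. -/
theorem stmt_2 (n : ℕ) (hn : 4 ≤ n) (p₁ p₂ p₃ : Fin n)
    (R : Finset (Fin n)) (hR : R = {p₁, p₂, p₃}) (hcard : R.card = 3)
    (a : Finset (Fin n) → ℝ) (ha : Admissible n R a)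
    (h12 : a {p₁, p₂} = 0) (h13 : a {p₁, p₃} = 0) (h123 : a {p₁, p₂, p₃} = 0) :
    ∀ S : Finset (Fin n), 0 ≤ a S := by
  have hR0 : a R = 0 := hR ▸ h123
  refine ha.nonneg_of_profile_nonneg hcard.le fun T hTR hT1 j hj => ?_
  have hT : T ⊂ R := Finset.ssubset_iff_subset_ne.mpr ⟨hTR, by rintro rfl; omega⟩
  exact ha.profile_nonneg hT hT1 hR0 (ha.apply_sdiff_nonneg hn hR hcard h12 h13 hR0 hTR hT1) hj
end

section
/- Let n ≥ 4 and k be integers with 1 ≤ k ≤ n−3, and let a : ℕ → ℝ satisfy a(1) = 0 and a(j) = a(n−j) for all 1 ≤ j ≤ n−1. Then Σ_{i=1}^{n−k−2} ( a(k+1) + a(k+i) + a(i+1) − a(k) − a(i) − a(n−k−i−1) ) = (n−k)·a(k+1) − (n−k−2)·a(k). -/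
open Finset

/-! The symmetry `a (n - k - i - 1) = a (k + i + 1)` splits each summand into the constant
`a (k + 1) - a k` plus two telescoping differences, which sum to `a (n - k - 1) - a 1` and
`a (n - 1) - a (k + 1)`; symmetry and `a 1 = 0` turn these into `a (k + 1)` and `0`. -/

theorem stmt_3_general (n k : ℕ) (hn : 4 ≤ n) (hk2 : k ≤ n - 3)
    (a : ℕ → ℝ) (h1 : a 1 = 0)
    (hsym : ∀ j : ℕ, 1 ≤ j → j ≤ n - 1 → a j = a (n - j)) :
    ∑ i ∈ Finset.Icc 1 (n - k - 2),
        (a (k + 1) + a (k + i) + a (i + 1) - a k - a i - a (n - k - i - 1))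
      = ((n : ℝ) - k) * a (k + 1) - ((n : ℝ) - k - 2) * a k := by
  obtain ⟨N, rfl⟩ : ∃ N, n = k + N + 3 := ⟨n - k - 3, by omega⟩
  have hterm : ∀ i ∈ Icc 1 (N + 1),
      a (k + 1) + a (k + i) + a (i + 1) - a k - a i - a (k + N + 3 - k - i - 1)
        = (a (k + 1) - a k) + (a (i + 1) - a i) - (a (k + (i + 1)) - a (k + i)) := by
    intro i hi
    rw [mem_Icc] at hi
    have hmirror : k + N + 3 - k - i - 1 = k + N + 3 - (k + (i + 1)) := by omega
    rw [hmirror, ← hsym _ (by omega) (by omega)]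
    ring
  have hlen : k + N + 3 - k - 2 = N + 1 := by omega
  rw [hlen, sum_congr rfl hterm, sum_sub_distrib, sum_add_distrib, sum_const, Nat.card_Icc,
    sum_Icc_sub (by omega), sum_Icc_sub (f := fun j ↦ a (k + j)) (by omega)]
  have hmirror_k : a (N + 2) = a (k + 1) := by
    rw [hsym (k + 1) (by omega) (by omega), show k + N + 3 - (k + 1) = N + 2 by omega]
  have hlast : a (k + (N + 1 + 1)) = 0 := by
    rw [show k + (N + 1 + 1) = k + N + 3 - 1 by omega, ← hsym 1 le_rfl (by omega), h1]
  rw [hmirror_k, hlast, h1, Nat.add_sub_cancel, nsmul_eq_mul]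
  push_cast
  ring

/-- The telescoping identity for the case `m = n` of the paper's Theorem:
summing the F-curve intersection numbers of the partitions `(1, k, i, *)`
over `i = 1, …, n-k-2` gives `(n-k)·a(k+1) - (n-k-2)·a(k)`. -/
theorem stmt_3 (n k : ℕ) (hn : 4 ≤ n) (hk1 : 1 ≤ k) (hk2 : k ≤ n - 3)
    (a : ℕ → ℝ) (h1 : a 1 = 0)
    (hsym : ∀ j : ℕ, 1 ≤ j → j ≤ n - 1 → a j = a (n - j)) :
    ∑ i ∈ Finset.Icc 1 (n - k - 2),
        (a (k + 1) + a (k + i) + a (i + 1) - a k - a i - a (n - k - i - 1))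
      = ((n : ℝ) - k) * a (k + 1) - ((n : ℝ) - k - 2) * a k :=
  stmt_3_general n k hn hk2 a h1 hsym
end

section
/- Let n ≥ 4 be an integer and let a, d : ℕ → ℝ satisfy a(1) = 0, a(j) = d(n−j) for all 1 ≤ j ≤ n−1, and d(2) = 0. Suppose that for all integers k, i with 2 ≤ k ≤ n−3 and 1 ≤ i ≤ n−k−2 one has d(k+1) + d(k+i) + a(i+1) ≥ d(k) + a(i) + d(k+i+1). Then d(h) ≥ 0 for every 2 ≤ h ≤ n−2, and consequently a(h) = d(n−h) ≥ 0 for every 2 ≤ h ≤ n−2. -/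
/-!
Fix `k` with `d k ≥ 0` and sum the inequality for `(k, i)` over `1 ≤ i ≤ M := n - k - 2`.
Writing it as `0 ≤ (d (k+1) - d k) + (f (i+1) - f i)` with `f i = a i - d (k+i)`, the sum
telescopes to `0 ≤ M (d (k+1) - d k) + f (M+1) - f 1`. By the symmetry `a j = d (n-j)` and
`a 1 = 0`, the boundary terms are `a (M+1) = d (k+1)` and `d (k+M+1) = d (n-1) = a 1 = 0`,
so `(M + 2) d (k+1) ≥ M d k ≥ 0`. Induction from `d 2 = 0` gives `d h ≥ 0`, and then `a h ≥ 0`.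
-/

theorem mul_add_sub_nonneg_of_forall_add_sub_nonneg {f : ℕ → ℝ} {c : ℝ} :
    ∀ M : ℕ, (∀ i, 1 ≤ i → i ≤ M → 0 ≤ c + (f (i + 1) - f i)) →
      0 ≤ M * c + (f (M + 1) - f 1)
  | 0, _ => by simp
  | M + 1, h => by
    have hM := mul_add_sub_nonneg_of_forall_add_sub_nonneg M fun i hi hiM => h i hi (by omega)
    have hlast := h (M + 1) (by omega) le_rfl
    push_cast
    linarith

theorem nonneg_succ_of_nonneg {n : ℕ} {a d : ℕ → ℝ} (h1 : a 1 = 0)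
    (hsym : ∀ j : ℕ, 1 ≤ j → j ≤ n - 1 → a j = d (n - j))
    (hyp : ∀ k i : ℕ, 2 ≤ k → k ≤ n - 3 → 1 ≤ i → i ≤ n - k - 2 →
      d k + a i + d (k + i + 1) ≤ d (k + 1) + d (k + i) + a (i + 1))
    {k : ℕ} (hk2 : 2 ≤ k) (hkn : k ≤ n - 3) (hdk : 0 ≤ d k) : 0 ≤ d (k + 1) := by
  set M := n - k - 2
  have hsum : 0 ≤ M * (d (k + 1) - d k) +
      ((a (M + 1) - d (k + (M + 1))) - (a 1 - d (k + 1))) :=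
    mul_add_sub_nonneg_of_forall_add_sub_nonneg (f := fun i => a i - d (k + i)) M
      fun i hi hiM => by
        have := hyp k i hk2 hkn hi hiM
        simp only [← add_assoc]
        linarith
  have haM : a (M + 1) = d (k + 1) := by
    rw [hsym (M + 1) (by omega) (by omega)]
    congr 1
    omega
  have hdM : d (k + (M + 1)) = 0 := by
    rw [show k + (M + 1) = n - 1 by omega, ← h1, hsym 1 le_rfl (by omega)]
  rw [haM, hdM, h1] at hsum
  have hMk : 0 ≤ (M : ℝ) * d k := mul_nonneg M.cast_nonneg hdk
  have hM2 : (0 : ℝ) < M + 2 := by positivity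
  exact nonneg_of_mul_nonneg_right (a := (M : ℝ) + 2) (by linarith) hM2

theorem stmt_6_general (n : ℕ) (a d : ℕ → ℝ) (h1 : a 1 = 0)
    (hsym : ∀ j : ℕ, 1 ≤ j → j ≤ n - 1 → a j = d (n - j)) (hd2 : d 2 = 0)
    (hyp : ∀ k i : ℕ, 2 ≤ k → k ≤ n - 3 → 1 ≤ i → i ≤ n - k - 2 →
      d k + a i + d (k + i + 1) ≤ d (k + 1) + d (k + i) + a (i + 1)) :
    (∀ h : ℕ, 2 ≤ h → h ≤ n - 2 → 0 ≤ d h) ∧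
    (∀ h : ℕ, 2 ≤ h → h ≤ n - 2 → 0 ≤ a h) := by
  have hd : ∀ h : ℕ, 2 ≤ h → h ≤ n - 2 → 0 ≤ d h := by
    intro h h2
    induction h, h2 using Nat.le_induction with
    | base => exact fun _ => hd2.ge
    | succ k hk2 ih =>
      exact fun hkn => nonneg_succ_of_nonneg h1 hsym hyp hk2 (by omega) (ih (by omega))
  refine ⟨hd, fun h h2 hn2 => ?_⟩
  rw [hsym h (by omega) (by omega)]
  exact hd (n - h) (by omega) (by omega)

/-- Positivity of the coefficients `[h]_{{1,2}}` in the case `m = n-2`: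
from the normalization `d(2) = 0` and the F-curve inequalities of the
partitions `(1, k_{{1,2}}, i, *)`, all `d(h)` with `2 ≤ h ≤ n-2` are
nonnegative, hence so are all `a(h) = d(n-h)`. -/
theorem stmt_6 (n : ℕ) (hn : 4 ≤ n) (a d : ℕ → ℝ) (h1 : a 1 = 0)
    (hsym : ∀ j : ℕ, 1 ≤ j → j ≤ n - 1 → a j = d (n - j)) (hd2 : d 2 = 0)
    (hyp : ∀ k i : ℕ, 2 ≤ k → k ≤ n - 3 → 1 ≤ i → i ≤ n - k - 2 →
      d k + a i + d (k + i + 1) ≤ d (k + 1) + d (k + i) + a (i + 1)) :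
    (∀ h : ℕ, 2 ≤ h → h ≤ n - 2 → 0 ≤ d h) ∧
    (∀ h : ℕ, 2 ≤ h → h ≤ n - 2 → 0 ≤ a h) :=
  stmt_6_general n a d h1 hsym hd2 hyp
end

section
/- Let n ≥ 4 and k be integers with 1 ≤ k ≤ n−3, and let a, d, e : ℕ → ℝ satisfy a(1) = 0, a(j) = d(n−j) for all 1 ≤ j ≤ n−1, and e(n−1) = 0. If e(k+1) + e(k+i) + a(i+1) ≥ e(k) + a(i) + e(k+i+1) for every integer i with 1 ≤ i ≤ n−k−2, then (n−k−1)·e(k+1) + d(k+1) ≥ (n−k−2)·e(k). -/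
/-!
Write `f i = a (i + 1) - e (k + i + 1)`. The F-curve inequality for `i + 1` says exactly that each
increment `f (i + 1) - f i` is at least `e k - e (k + 1)`, so telescoping over the `n - k - 2`
steps gives `(n - k - 2) (e k - e (k + 1)) ≤ f (n - k - 2) - f 0`. The boundary values
`a 1 = 0`, `e (n - 1) = 0` and `a (n - k - 1) = d (k + 1)` turn this into the claim.
-/

theorem nsmul_le_sub_of_forall_le_sub_succ {M : Type*} [AddCommGroup M] [PartialOrder M]
    [IsOrderedAddMonoid M] {f : ℕ → M} {c : M} {m : ℕ} (h : ∀ i < m, c ≤ f (i + 1) - f i) :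
    m • c ≤ f m - f 0 := by
  rw [← Finset.sum_range_sub]
  simpa using Finset.card_nsmul_le_sum (Finset.range m) _ c fun i hi ↦ h i (Finset.mem_range.mp hi)

theorem stmt_7_general (n k : ℕ) (hn : 4 ≤ n) (hk2 : k ≤ n - 3)
    (a d e : ℕ → ℝ) (h1 : a 1 = 0)
    (hsym : ∀ j : ℕ, 1 ≤ j → j ≤ n - 1 → a j = d (n - j))
    (he : e (n - 1) = 0)
    (hyp : ∀ i : ℕ, 1 ≤ i → i ≤ n - k - 2 →
      e k + a i + e (k + i + 1) ≤ e (k + 1) + e (k + i) + a (i + 1)) :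
    ((n : ℝ) - k - 2) * e k ≤ ((n : ℝ) - k - 1) * e (k + 1) + d (k + 1) := by
  have hkn : k + 2 ≤ n := by omega
  have telescope := nsmul_le_sub_of_forall_le_sub_succ
    (f := fun i ↦ a (i + 1) - e (k + i + 1)) (c := e k - e (k + 1)) (m := n - k - 2)
    fun i hi ↦ by
      have := hyp (i + 1) (by omega) (by omega)
      simp only [← add_assoc] at this ⊢
      linarith
  have hlast : k + (n - k - 2) + 1 = n - 1 := by omega
  have hsym' : a (n - k - 2 + 1) = d (k + 1) := by
    rw [hsym _ (by omega) (by omega)]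
    congr 1
    omega
  have hcast : ((n - k - 2 : ℕ) : ℝ) = (n : ℝ) - k - 2 := by
    rw [Nat.sub_sub, Nat.cast_sub (by omega)]
    push_cast
    ring
  simp only [nsmul_eq_mul, hlast, hsym', he, add_zero, h1, zero_add, hcast] at telescope
  linarith

/-- The mixed summation inequality in the case `m = n-2`: summing the
F-curve inequalities of the partitions `(1, k_{{α}}, i, *)` over
`i = 1, …, n-k-2` yields `(n-k-1)·e(k+1) + d(k+1) ≥ (n-k-2)·e(k)`. -/
theorem stmt_7 (n k : ℕ) (hn : 4 ≤ n) (hk1 : 1 ≤ k) (hk2 : k ≤ n - 3)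
    (a d e : ℕ → ℝ) (h1 : a 1 = 0)
    (hsym : ∀ j : ℕ, 1 ≤ j → j ≤ n - 1 → a j = d (n - j))
    (he : e (n - 1) = 0)
    (hyp : ∀ i : ℕ, 1 ≤ i → i ≤ n - k - 2 →
      e k + a i + e (k + i + 1) ≤ e (k + 1) + e (k + i) + a (i + 1)) :
    ((n : ℝ) - k - 2) * e k ≤ ((n : ℝ) - k - 1) * e (k + 1) + d (k + 1) :=
  stmt_7_general n k hn hk2 a d e h1 hsym he hyp
end
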